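/- Let n ≥ 3 be even. Then the poset P_{n+1} (subsets of [n+1] arising as circular peak sets of permutations of [n+1], ordered by inclusion) is order-isomorphic to the product poset {0,1} × P_n, where {0,1} carries the order 0 < 1 and the product is ordered componentwise. An explicit isomorphism sends S ∈ P_{n+1} to (1, S \ {n+1}) if n+1 ∈ S and to (0, S) otherwise. -/

import Mathlib

open Finset Polynomial

/-- `σ` is a permutation of `[n] = {1, …, n}` (viewed as a function `ℕ → ℕ`
restricted to a bijection of `{1, …, n}` onto itself). -/
def IsPermOn (n : ℕ) (σ : ℕ → ℕ) : Prop :=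
  Set.BijOn σ (Set.Icc 1 n) (Set.Icc 1 n)

/-- The circular peak set of `σ` (as a permutation of `[n]`):
`CP(σ) = {σ(i) : 2 ≤ i ≤ n−1, σ(i−1) < σ(i) > σ(i+1)}`. -/
def CP (n : ℕ) (σ : ℕ → ℕ) : Finset ℕ :=
  ((Finset.Icc 2 (n - 1)).filter (fun i => σ (i - 1) < σ i ∧ σ (i + 1) < σ i)).image σ

open scoped Classical in
/-- `Pn n` is the collection of all subsets `S ⊆ [n]` arising as the circular peak
set of some permutation of `[n]`. -/
noncomputable def Pn (n : ℕ) : Finset (Finset ℕ) :=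
  (Finset.Icc 1 n).powerset.filter (fun S => ∃ σ : ℕ → ℕ, IsPermOn n σ ∧ CP n σ = S)

/-- `pcount n k` is the number of members of `Pn n` of cardinality `k`;
in the paper's notation, `p_{n,i} = pcount n (i+1)`. -/
noncomputable def pcount (n k : ℕ) : ℕ :=
  ((Pn n).filter (fun S => S.card = k)).card

/-- The f-polynomial `P_n(x) = Σ_{i=0}^{⌊(n−1)/2⌋} p_{n,i−1} x^{⌊(n−1)/2⌋−i}`. -/
noncomputable def fpoly (n : ℕ) : Polynomial ℚ :=
  ∑ i ∈ Finset.range ((n - 1) / 2 + 1),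
    Polynomial.C (pcount n i : ℚ) * Polynomial.X ^ ((n - 1) / 2 - i)

/-!
A set `S ⊆ [n]` is the peak set of a permutation of `[n]` exactly when every `s ∈ S` satisfies
`2 · #{t ∈ S | t ≤ s} + 1 ≤ s`. Necessity: the peaks of value at most `s`, their right neighbours
and the left neighbour of the first of them occupy that many positions, all carrying values in
`[1, s]`. Sufficiency: interleave the increasing lists `c₀ < c₁ < ⋯` of `[n] \ S` and
`s₀ < s₁ < ⋯` of `S` as `c₀ s₀ c₁ s₁ ⋯`, then append the remaining `cⱼ`; the condition gives
`c_{i+1} < sᵢ`, so the peaks are exactly the `sᵢ`.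

The condition is inherited by subsets and does not involve `n`, so `P_{n+1}` consists of `P_n`
and of the sets `S ∪ {n+1}` with `S ∈ P_n`; for the latter the condition at `n + 1` reads
`2 · #S + 3 ≤ n + 1`, which follows from `2 · #S + 1 ≤ n` because `n` is even.
-/

def PeakAdmissible (S : Finset ℕ) : Prop :=
  ∀ s ∈ S, 2 * #{t ∈ S | t ≤ s} + 1 ≤ s

lemma card_insert_min'_pred_union_image_succ {T : Finset ℕ} (hT : T.Nonempty) (h0 : 0 ∉ T)
    (hsep : ∀ i ∈ T, i + 1 ∉ T) :
    #(insert (T.min' hT - 1) (T ∪ T.image (· + 1))) = 2 * #T + 1 := by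
  have hdisj : Disjoint T (T.image (· + 1)) := by
    simp only [disjoint_left, mem_image, not_exists, not_and]
    rintro _ hi j hj rfl
    exact hsep j hj hi
  have hmin_pos : 0 < T.min' hT := Nat.pos_of_ne_zero fun h => h0 (h ▸ T.min'_mem hT)
  have hmin : T.min' hT - 1 ∉ T ∪ T.image (· + 1) := by
    simp only [mem_union, mem_image, not_or, not_exists, not_and]
    exact ⟨fun h => by have := T.min'_le _ h; omega, fun j hj h => by have := T.min'_le _ hj; omega⟩
  rw [card_insert_of_notMem hmin, card_union_of_disjoint hdisj,
    card_image_of_injective _ (add_left_injective 1)]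
  ring

lemma peakAdmissible_CP {n : ℕ} {σ : ℕ → ℕ} (hσ : IsPermOn n σ) : PeakAdmissible (CP n σ) := by
  intro s hs
  set T := {i ∈ Icc 2 (n - 1) | (σ (i - 1) < σ i ∧ σ (i + 1) < σ i) ∧ σ i ≤ s}
  have hT : ∀ i ∈ T, 2 ≤ i ∧ i ≤ n - 1 ∧ σ (i - 1) < σ i ∧ σ (i + 1) < σ i ∧ σ i ≤ s := by
    intro i hi
    simp only [T, mem_filter, mem_Icc] at hi
    tauto
  have hT_Icc : (T : Set ℕ) ⊆ Set.Icc 1 n := fun i hi => by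
    have := hT i hi
    exact ⟨by omega, by omega⟩
  have hfilter : {t ∈ CP n σ | t ≤ s} = T.image σ := by
    rw [CP, filter_image, filter_filter]
  have hT_ne : T.Nonempty := by
    obtain ⟨i, hi, rfl⟩ := mem_image.1 hs
    exact ⟨i, mem_filter.2 ⟨(mem_filter.1 hi).1, (mem_filter.1 hi).2, le_rfl⟩⟩
  set N := insert (T.min' hT_ne - 1) (T ∪ T.image (· + 1))
  have hN : ∀ x ∈ N, x ∈ Set.Icc 1 n ∧ σ x ≤ s := by
    intro x hx
    simp only [N, mem_insert, mem_union, mem_image] at hx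
    rcases hx with rfl | hx | ⟨i, hi, rfl⟩
    · have := hT _ (T.min'_mem hT_ne)
      exact ⟨⟨by omega, by omega⟩, by omega⟩
    · have := hT x hx
      exact ⟨⟨by omega, by omega⟩, this.2.2.2.2⟩
    · have := hT i hi
      exact ⟨⟨by omega, by omega⟩, by omega⟩
  have hN_card : #N = 2 * #T + 1 := card_insert_min'_pred_union_image_succ hT_ne
    (fun h => by have := hT 0 h; omega) fun i hi h => by
      have := hT i hi
      have := hT _ h
      simp only [Nat.add_sub_cancel] at this
      omega
  have hσN : N.image σ ⊆ Icc 1 s := by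
    intro y hy
    obtain ⟨x, hx, rfl⟩ := mem_image.1 hy
    exact mem_Icc.2 ⟨(hσ.mapsTo (hN x hx).1).1, (hN x hx).2⟩
  calc 2 * #{t ∈ CP n σ | t ≤ s} + 1 = #(N.image σ) := by
        rw [hfilter, card_image_of_injOn (hσ.injOn.mono hT_Icc),
          card_image_of_injOn (hσ.injOn.mono fun x hx => (hN x hx).1), hN_card]
    _ ≤ #(Icc 1 s) := card_le_card hσN
    _ = s := by simp

section Construction

variable {S : Finset ℕ}

abbrev IsGap (S : Finset ℕ) (x : ℕ) : Prop := 0 < x ∧ x ∉ S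

/-- The `p`-th letter (counting from `1`) of the word `c₀ s₀ c₁ s₁ ⋯ c_{k-1} s_{k-1} c_k c_{k+1} ⋯`,
where `s₀ < ⋯ < s_{k-1}` lists `S` and `c₀ < c₁ < ⋯` lists the gaps of `S`. -/
noncomputable def peakPerm (S : Finset ℕ) (p : ℕ) : ℕ :=
  if p % 2 = 0 ∧ p ≤ 2 * #S then Nat.nth (· ∈ S) (p / 2 - 1)
  else Nat.nth (IsGap S) (p - 1 - min (p / 2) #S)

lemma peakPerm_even {i : ℕ} (hi : i < #S) : peakPerm S (2 * i + 2) = Nat.nth (· ∈ S) i := by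
  rw [peakPerm, if_pos (by omega)]
  congr 1
  omega

lemma peakPerm_odd {i : ℕ} (hi : i ≤ #S) : peakPerm S (2 * i + 1) = Nat.nth (IsGap S) i := by
  rw [peakPerm, if_neg (by omega)]
  congr 1
  omega

lemma peakPerm_of_le {p : ℕ} (hp : 2 * #S + 1 ≤ p) :
    peakPerm S p = Nat.nth (IsGap S) (p - #S - 1) := by
  rw [peakPerm, if_neg (by omega)]
  congr 1
  omega

lemma nth_mem_of_lt_card {i : ℕ} (hi : i < #S) : Nat.nth (· ∈ S) i ∈ S :=
  Nat.nth_mem (p := (· ∈ S)) i fun hf => by simpa using hi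

lemma count_nth_of_lt_card {i : ℕ} (hi : i < #S) : Nat.count (· ∈ S) (Nat.nth (· ∈ S) i) = i :=
  Nat.count_nth fun hf => by simpa using hi

lemma count_lt_card_of_mem {y : ℕ} (hy : y ∈ S) : Nat.count (· ∈ S) y < #S := by
  simpa using Nat.count_lt_card S.finite_toSet hy

lemma isGap_infinite (S : Finset ℕ) : (Set.ofPred (IsGap S)).Infinite :=
  (Set.Ioi_infinite 0).sdiff S.finite_toSet

lemma count_isGap_add_count_mem (h0 : 0 ∉ S) (s : ℕ) :
    Nat.count (IsGap S) s + Nat.count (· ∈ S) s = s - 1 := by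
  induction s with
  | zero => simp
  | succ s ih =>
    rw [Nat.count_succ, Nat.count_succ]
    rcases Nat.eq_zero_or_pos s with rfl | hs
    · simp [h0]
    · by_cases hsS : s ∈ S
      · rw [if_neg fun h => h.2 hsS, if_pos hsS]
        omega
      · rw [if_pos ⟨hs, hsS⟩, if_neg hsS]
        omega

lemma count_mem_of_subset_Icc {n : ℕ} (hS : S ⊆ Icc 1 n) : Nat.count (· ∈ S) (n + 1) = #S := by
  rw [Nat.count_eq_card_filter_range, filter_mem_eq_inter,
    inter_eq_right.2 fun x hx => mem_range.2 (Nat.lt_succ_of_le (mem_Icc.1 (hS hx)).2)]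

lemma count_isGap_of_subset_Icc {n : ℕ} (hS : S ⊆ Icc 1 n) :
    Nat.count (IsGap S) (n + 1) = n - #S := by
  have h0 : 0 ∉ S := fun h => by simpa using hS h
  have := count_isGap_add_count_mem h0 (n + 1)
  rw [count_mem_of_subset_Icc hS] at this
  omega

lemma card_filter_le_eq_count_succ (s : ℕ) : #{t ∈ S | t ≤ s} = Nat.count (· ∈ S) (s + 1) := by
  rw [Nat.count_eq_card_filter_range]
  congr 1
  ext
  simp [and_comm]

namespace PeakAdmissible

lemma two_mul_add_three_le_nth (h : PeakAdmissible S) {i : ℕ} (hi : i < #S) :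
    2 * i + 3 ≤ Nat.nth (· ∈ S) i := by
  have hmem := nth_mem_of_lt_card hi
  have := h _ hmem
  rwa [card_filter_le_eq_count_succ, Nat.count_succ, count_nth_of_lt_card hi, if_pos hmem] at this

/-- Below `sᵢ` there are `i` elements of `S` and hence `sᵢ - 1 - i ≥ i + 2` gaps. -/
lemma nth_isGap_succ_lt (h : PeakAdmissible S) (h0 : 0 ∉ S) {i : ℕ} (hi : i < #S) :
    Nat.nth (IsGap S) (i + 1) < Nat.nth (· ∈ S) i := by
  apply Nat.nth_lt_of_lt_count
  have := count_isGap_add_count_mem h0 (Nat.nth (· ∈ S) i)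
  have := h.two_mul_add_three_le_nth hi
  rw [count_nth_of_lt_card hi] at *
  omega

lemma two_mul_card_add_one_le {n : ℕ} (h : PeakAdmissible S) (hS : S ⊆ Icc 1 n)
    (hne : S.Nonempty) : 2 * #S + 1 ≤ n := by
  have hmax := S.max'_mem hne
  have := h _ hmax
  rw [filter_true_of_mem fun t ht => S.le_max' t ht] at this
  have := mem_Icc.1 (hS hmax)
  omega

end PeakAdmissible

lemma isPermOn_peakPerm {n : ℕ} (h : PeakAdmissible S) (hS : S ⊆ Icc 1 n) :
    IsPermOn n (peakPerm S) := by
  have h0 : 0 ∉ S := fun h => by simpa using hS h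
  have hgap := count_isGap_of_subset_Icc hS
  have hk : #S = 0 ∨ 2 * #S + 1 ≤ n := by
    rcases S.eq_empty_or_nonempty with rfl | hne
    · exact Or.inl rfl
    · exact Or.inr (h.two_mul_card_add_one_le hS hne)
  have hmaps : Set.MapsTo (peakPerm S) (Set.Icc 1 n) (Set.Icc 1 n) := by
    rintro p ⟨hp1, hpn⟩
    unfold peakPerm
    split_ifs with hp
    · exact mem_Icc.1 (hS (nth_mem_of_lt_card (by omega)))
    · have hj : p - 1 - min (p / 2) #S < Nat.count (IsGap S) (n + 1) := by omega
      exact ⟨(Nat.nth_mem_of_infinite (isGap_infinite S) _).1,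
        Nat.lt_succ_iff.1 (Nat.nth_lt_of_lt_count hj)⟩
  refine ((Set.finite_Icc 1 n).surjOn_iff_bijOn_of_mapsTo hmaps).1 ?_
  rintro y ⟨hy1, hyn⟩
  by_cases hyS : y ∈ S
  · have hi := count_lt_card_of_mem hyS
    have := h.two_mul_add_three_le_nth hi
    rw [Nat.nth_count hyS] at this
    exact ⟨_, ⟨by omega, by omega⟩, (peakPerm_even hi).trans (Nat.nth_count hyS)⟩
  · have hyg : IsGap S y := ⟨hy1, hyS⟩
    have hj : Nat.count (IsGap S) y < n - #S := hgap ▸ Nat.count_strict_mono hyg (by omega)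
    rcases le_or_gt (Nat.count (IsGap S) y) #S with hjk | hjk
    · exact ⟨_, ⟨by omega, by omega⟩, (peakPerm_odd hjk).trans (Nat.nth_count hyg)⟩
    · refine ⟨Nat.count (IsGap S) y + #S + 1, ⟨by omega, by omega⟩, ?_⟩
      rw [peakPerm_of_le (by omega), show Nat.count (IsGap S) y + #S + 1 - #S - 1 =
        Nat.count (IsGap S) y by omega, Nat.nth_count hyg]

lemma peakPerm_isPeak_iff (h : PeakAdmissible S) (h0 : 0 ∉ S) {p : ℕ} (hp : 2 ≤ p) :
    (peakPerm S (p - 1) < peakPerm S p ∧ peakPerm S (p + 1) < peakPerm S p) ↔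
      p % 2 = 0 ∧ p ≤ 2 * #S := by
  have hgap := Nat.nth_strictMono (isGap_infinite S)
  constructor
  · rintro ⟨hl, hr⟩
    by_contra hne
    rcases le_or_gt (2 * #S + 1) p with htail | hodd
    · rw [peakPerm_of_le htail, peakPerm_of_le (by omega : 2 * #S + 1 ≤ p + 1)] at hr
      exact (hgap (by omega : p - #S - 1 < p + 1 - #S - 1)).not_gt hr
    · obtain ⟨m, rfl⟩ : ∃ m, p = 2 * (m + 1) + 1 := ⟨p / 2 - 1, by omega⟩
      rw [show 2 * (m + 1) + 1 - 1 = 2 * m + 2 by omega, peakPerm_even (by omega),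
        peakPerm_odd (by omega)] at hl
      exact (h.nth_isGap_succ_lt h0 (by omega)).not_gt hl
  · rintro ⟨hev, hle⟩
    obtain ⟨i, rfl⟩ : ∃ i, p = 2 * i + 2 := ⟨p / 2 - 1, by omega⟩
    rw [show 2 * i + 2 - 1 = 2 * i + 1 by omega, show 2 * i + 2 + 1 = 2 * (i + 1) + 1 by omega,
      peakPerm_odd (by omega), peakPerm_even (by omega), peakPerm_odd (by omega)]
    have := h.nth_isGap_succ_lt h0 (i := i) (by omega)
    exact ⟨(hgap (Nat.lt_succ_self i)).trans this, this⟩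

lemma CP_peakPerm {n : ℕ} (h : PeakAdmissible S) (hS : S ⊆ Icc 1 n) : CP n (peakPerm S) = S := by
  have h0 : 0 ∉ S := fun h => by simpa using hS h
  ext y
  simp only [CP, mem_image, mem_filter, mem_Icc]
  constructor
  · rintro ⟨p, ⟨⟨hp2, hpn⟩, hpeak⟩, rfl⟩
    obtain ⟨hev, hle⟩ := (peakPerm_isPeak_iff h h0 hp2).1 hpeak
    obtain ⟨i, rfl⟩ : ∃ i, p = 2 * i + 2 := ⟨p / 2 - 1, by omega⟩
    rw [peakPerm_even (by omega)]
    exact nth_mem_of_lt_card (by omega)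
  · intro hy
    have hi := count_lt_card_of_mem hy
    have := h.two_mul_add_three_le_nth hi
    rw [Nat.nth_count hy] at this
    have := mem_Icc.1 (hS hy)
    refine ⟨2 * Nat.count (· ∈ S) y + 2, ⟨⟨by omega, by omega⟩,
      (peakPerm_isPeak_iff h h0 (by omega)).2 ⟨by omega, by omega⟩⟩, ?_⟩
    rw [peakPerm_even hi, Nat.nth_count hy]

end Construction

lemma mem_Pn_iff {n : ℕ} {S : Finset ℕ} : S ∈ Pn n ↔ S ⊆ Icc 1 n ∧ PeakAdmissible S := by
  simp only [Pn, mem_filter, mem_powerset]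
  constructor
  · rintro ⟨hS, σ, hσ, rfl⟩
    exact ⟨hS, peakAdmissible_CP hσ⟩
  · rintro ⟨hS, h⟩
    exact ⟨hS, peakPerm S, isPermOn_peakPerm h hS, CP_peakPerm h hS⟩

namespace PeakAdmissible

lemma mono {S T : Finset ℕ} (h : PeakAdmissible S) (hTS : T ⊆ S) : PeakAdmissible T :=
  fun s hs => le_trans (by gcongr) (h s (hTS hs))

lemma insert_of_forall_lt {S : Finset ℕ} {a : ℕ} (h : PeakAdmissible S) (hlt : ∀ s ∈ S, s < a)
    (ha : 2 * #S + 3 ≤ a) : PeakAdmissible (insert a S) := by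
  have haS : a ∉ S := fun haS => (hlt a haS).false
  intro s hs
  rcases mem_insert.1 hs with rfl | hs
  · rw [filter_true_of_mem fun t ht => (mem_insert.1 ht).elim le_of_eq fun ht => (hlt t ht).le,
      card_insert_of_notMem haS]
    omega
  · rw [filter_insert, if_neg (hlt s hs).not_ge]
    exact h s hs

end PeakAdmissible

lemma mem_Pn_of_subset {n : ℕ} {S T : Finset ℕ} (hS : S ∈ Pn n) (hTS : T ⊆ S) : T ∈ Pn n := by
  rw [mem_Pn_iff] at hS ⊢
  exact ⟨hTS.trans hS.1, hS.2.mono hTS⟩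

lemma mem_Pn_iff_mem_Pn_succ_and_succ_notMem {n : ℕ} {S : Finset ℕ} :
    S ∈ Pn n ↔ S ∈ Pn (n + 1) ∧ n + 1 ∉ S := by
  simp only [mem_Pn_iff, subset_iff, mem_Icc]
  constructor
  · rintro ⟨hS, h⟩
    refine ⟨⟨fun x hx => ?_, h⟩, fun hn => ?_⟩
    · have := hS hx
      omega
    · have := hS hn
      omega
  · rintro ⟨⟨hS, h⟩, hn⟩
    refine ⟨fun x hx => ?_, h⟩
    have := hS hx
    have : x ≠ n + 1 := by rintro rfl; exact hn hx
    omega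

lemma insert_succ_mem_Pn_succ {n : ℕ} {S : Finset ℕ} (hn : 2 ≤ n) (hev : Even n) (hS : S ∈ Pn n) :
    insert (n + 1) S ∈ Pn (n + 1) := by
  rw [mem_Pn_iff] at hS ⊢
  obtain ⟨hsub, h⟩ := hS
  have hcard : 2 * #S + 3 ≤ n + 1 := by
    rcases S.eq_empty_or_nonempty with rfl | hne
    · simpa using hn
    · have := h.two_mul_card_add_one_le hsub hne
      obtain ⟨r, rfl⟩ := hev
      omega
  have hlt : ∀ s ∈ S, s < n + 1 := fun s hs => Nat.lt_succ_of_le (mem_Icc.1 (hsub hs)).2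
  refine ⟨insert_subset (by simp) (hsub.trans (Icc_subset_Icc_right (by omega))),
    h.insert_of_forall_lt hlt hcard⟩

def splitByMemOrderIso {α : Type*} [DecidableEq α] {p q : Finset α → Prop} (a : α)
    (hq : ∀ S, q S ↔ p S ∧ a ∉ S) (herase : ∀ S, p S → p (S.erase a))
    (hinsert : ∀ S, q S → p (insert a S)) : {S // p S} ≃o Fin 2 × {S // q S} where
  toFun S := (if a ∈ S.1 then 1 else 0, ⟨S.1.erase a, (hq _).2 ⟨herase _ S.2, notMem_erase a _⟩⟩)
  invFun x := if x.1 = 1 then ⟨insert a x.2.1, hinsert _ x.2.2⟩ else ⟨x.2.1, ((hq _).1 x.2.2).1⟩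
  left_inv S := by
    by_cases ha : a ∈ S.1
    · simp [ha, insert_erase ha]
    · simp [ha]
  right_inv := by
    rintro ⟨b, T, hT⟩
    have ha := ((hq T).1 hT).2
    fin_cases b <;> simp [ha]
  map_rel_iff' {S T} := by
    simp only [Equiv.coe_fn_mk, Prod.mk_le_mk, Subtype.mk_le_mk]
    show _ ↔ S.1 ⊆ T.1
    constructor
    · rintro ⟨hfst, hsnd⟩ x hx
      by_cases hxa : x = a
      · subst hxa
        by_contra hxT
        simp [hx, hxT] at hfst
      · exact (mem_erase.1 (hsnd (mem_erase.2 ⟨hxa, hx⟩))).2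
    · intro h
      refine ⟨?_, erase_subset_erase a h⟩
      split_ifs with hS hT
      exacts [le_rfl, absurd (h hS) hT, Fin.zero_le _, le_rfl]

/-- Theorem 3.3 (even case): for even `n`, `P_{n+1} ≅ 2 × P_n`, via
`S ↦ (1, S \ {n+1})` if `n+1 ∈ S` and `S ↦ (0, S)` otherwise. -/
theorem Pn_succ_orderIso_even (n : ℕ) (hn : 3 ≤ n) (hev : Even n) :
    ∃ e : {S : Finset ℕ // S ∈ Pn (n + 1)} ≃o (Fin 2 × {S : Finset ℕ // S ∈ Pn n}),
      ∀ S : {S : Finset ℕ // S ∈ Pn (n + 1)},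
        ((e S).1 = 1 ↔ (n + 1) ∈ S.val) ∧ ((e S).2 : Finset ℕ) = S.val.erase (n + 1) := by
  refine ⟨splitByMemOrderIso (n + 1) (fun _ => mem_Pn_iff_mem_Pn_succ_and_succ_notMem)
    (fun _ hS => mem_Pn_of_subset hS (erase_subset _ _))
    (fun _ => insert_succ_mem_Pn_succ (by omega) hev), fun S => ⟨?_, rfl⟩⟩
  by_cases h : n + 1 ∈ S.val <;> simp [splitByMemOrderIso, h]
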